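/- Consider the directed graph whose vertices are all 213-avoiding permutations containing at least one inversion (an occurrence of the pattern 21), with a directed edge from π to τ whenever τ is the output of the 213-insertion step at some position applied to π. Then for any two vertices σ and π of this graph, there is a directed path from σ to π. -/

import Mathlib

/-!
Every vertex reaches `21`, and `21` reaches every vertex.

From `σ` of length `n`, inserting `n + 1` in front creates no `213`; inserting a further
maximum after the first two entries `(n + 1) σ₁` does, so that step truncates to `(n + 1) σ₁`,
which standardizes to `21`.

Conversely, let `π` be a vertex with maximum `n`. Since `π` avoids `213`, the entries before `n`
increase, so `π` arises from `π` with `n` deleted by an insertion that needs no truncation. If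
that shorter permutation still has an inversion, induct on the length. Otherwise
`π = 1 ⋯ i n (i+1) ⋯ (n-1)`. To reach it, grow `21` into the cycle `2 3 ⋯ n 1` by inserting
maxima before the final `1`, insert `n + 1` after `i` entries, and then insert one more maximum
just before the final `1`: this creates a `213` and cuts the `1` off.
-/

open List

attribute [local instance] Classical.propDecidable

def IsPermList (n : ℕ) (l : List ℕ) : Prop :=
  l.Perm (List.range' 1 n)

def OrderIsoList (a b : List ℕ) : Prop :=
  a.length = b.length ∧
    ∀ i j, i < j → j < a.length →
      (a.getD i 0 < a.getD j 0 ↔ b.getD i 0 < b.getD j 0)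

def ContainsPat (l p : List ℕ) : Prop :=
  ∃ s, s.Sublist l ∧ OrderIsoList s p

def AvoidsPat (l p : List ℕ) : Prop := ¬ ContainsPat l p

def standardize (l : List ℕ) : List ℕ :=
  l.map fun x => (l.filter fun y => y ≤ x).length

def insertMax (l : List ℕ) (i : ℕ) : List ℕ :=
  l.take i ++ (l.length + 1) :: l.drop i

noncomputable def insStep (p l : List ℕ) (i : ℕ) : List ℕ :=
  standardize ((insertMax l i).take
    (Nat.findGreatest (fun k => AvoidsPat ((insertMax l i).take k) p)
      (insertMax l i).length))

def Vertex213 (l : List ℕ) : Prop :=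
  IsPermList l.length l ∧ AvoidsPat l [2, 1, 3] ∧ ContainsPat l [2, 1]

def Edge213 (l m : List ℕ) : Prop :=
  Vertex213 l ∧ Vertex213 m ∧ ∃ i, i ≤ l.length ∧ insStep [2, 1, 3] l i = m

lemma orderIsoList_21_iff (a b : ℕ) : OrderIsoList [a, b] [2, 1] ↔ b ≤ a := by
  refine ⟨fun h => ?_, fun h => ⟨rfl, fun i j hij hj => ?_⟩⟩
  · have := h.2 0 1 zero_lt_one (by simp)
    simp only [getD_cons_zero, getD_cons_succ] at this
    omega
  · obtain ⟨rfl, rfl⟩ : i = 0 ∧ j = 1 := by simp only [length_cons, length_nil] at hj; omega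
    simp only [getD_cons_zero, getD_cons_succ]
    omega

lemma orderIsoList_213_iff (a b c : ℕ) :
    OrderIsoList [a, b, c] [2, 1, 3] ↔ b ≤ a ∧ a < c ∧ b < c := by
  refine ⟨fun h => ?_, fun h => ⟨rfl, fun i j hij hj => ?_⟩⟩
  · have h01 := h.2 0 1 (by norm_num) (by simp)
    have h02 := h.2 0 2 (by norm_num) (by simp)
    have h12 := h.2 1 2 (by norm_num) (by simp)
    simp only [getD_cons_zero, getD_cons_succ] at h01 h02 h12
    omega
  · simp only [length_cons, length_nil] at hj
    interval_cases j <;> interval_cases i <;> simp [getD] <;> omega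

lemma containsPat_21_iff (l : List ℕ) :
    ContainsPat l [2, 1] ↔ ∃ a b, b ≤ a ∧ [a, b] <+ l := by
  constructor
  · rintro ⟨s, hs, hiso⟩
    obtain ⟨a, b, rfl⟩ := length_eq_two.mp (hiso.1.trans rfl)
    exact ⟨a, b, (orderIsoList_21_iff a b).mp hiso, hs⟩
  · rintro ⟨a, b, hba, hs⟩
    exact ⟨[a, b], hs, (orderIsoList_21_iff a b).mpr hba⟩

lemma containsPat_213_iff (l : List ℕ) :
    ContainsPat l [2, 1, 3] ↔ ∃ a b c, b ≤ a ∧ a < c ∧ b < c ∧ [a, b, c] <+ l := by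
  constructor
  · rintro ⟨s, hs, hiso⟩
    obtain ⟨a, b, c, rfl⟩ := length_eq_three.mp (hiso.1.trans rfl)
    obtain ⟨hba, hac, hbc⟩ := (orderIsoList_213_iff a b c).mp hiso
    exact ⟨a, b, c, hba, hac, hbc, hs⟩
  · rintro ⟨a, b, c, hba, hac, hbc, hs⟩
    exact ⟨[a, b, c], hs, (orderIsoList_213_iff a b c).mpr ⟨hba, hac, hbc⟩⟩

lemma avoidsPat_21_iff (l : List ℕ) : AvoidsPat l [2, 1] ↔ l.Pairwise (· < ·) := by
  simp only [AvoidsPat, containsPat_21_iff, pairwise_iff_forall_sublist, not_exists, not_and]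
  exact ⟨fun h a b hab => not_le.mp fun hba => h a b hba hab,
    fun h a b hba hab => (h hab).not_ge hba⟩

lemma ContainsPat.mono {s l p : List ℕ} (h : ContainsPat s p) (hs : s <+ l) : ContainsPat l p :=
  let ⟨t, ht, hiso⟩ := h
  ⟨t, ht.trans hs, hiso⟩

lemma AvoidsPat.sublist {s l p : List ℕ} (h : AvoidsPat l p) (hs : s <+ l) : AvoidsPat s p :=
  fun hc => h (hc.mono hs)

lemma ContainsPat.map_of_strictMono {l p : List ℕ} {f : ℕ → ℕ} (h : ContainsPat l p)
    (hf : StrictMono f) : ContainsPat (l.map f) p := by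
  obtain ⟨s, hs, hlen, hiso⟩ := h
  refine ⟨s.map f, hs.map f, by rw [length_map, hlen], fun i j hij hj => ?_⟩
  rw [length_map] at hj
  rw [getD_eq_getElem _ _ (by simpa using hij.trans hj), getD_eq_getElem _ _ (by simpa using hj),
    getElem_map, getElem_map, hf.lt_iff_lt, ← getD_eq_getElem _ 0, ← getD_eq_getElem _ 0]
  exact hiso i j hij hj

lemma avoidsPat_213_of_length_lt_three {l : List ℕ} (h : l.length < 3) :
    AvoidsPat l [2, 1, 3] := fun ⟨s, hs, hiso⟩ => by
  have := hs.length_le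
  simp only [hiso.1, length_cons, length_nil] at this
  omega

lemma avoidsPat_213_of_pairwise {l : List ℕ} (h : l.Pairwise (· < ·)) :
    AvoidsPat l [2, 1, 3] := by
  rw [AvoidsPat, containsPat_213_iff]
  rintro ⟨a, b, c, hba, -, -, hs⟩
  have hab : [a, b] <+ l := (((nil_sublist [c]).cons_cons b).cons_cons a).trans hs
  exact (pairwise_iff_forall_sublist.mp h hab).not_ge hba

lemma avoidsPat_213_middle {A B : List ℕ} {M : ℕ} (h : AvoidsPat (A ++ B) [2, 1, 3])
    (hA : A.Pairwise (· < ·)) (hM : ∀ x ∈ A ++ B, x < M) :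
    AvoidsPat (A ++ M :: B) [2, 1, 3] := by
  rw [AvoidsPat, containsPat_213_iff] at h ⊢
  rintro ⟨a, b, c, hba, hac, hbc, hs⟩
  obtain ⟨s₁, s₂, hsplit, h₁, h₂⟩ := sublist_append_iff.mp hs
  rcases sublist_cons_iff.mp h₂ with h₂ | ⟨r, rfl, hr⟩
  · exact h ⟨a, b, c, hba, hac, hbc, hsplit ▸ h₁.append h₂⟩
  · have hlt : ∀ x ∈ s₁ ++ r, x < M := fun x hx => hM x ((h₁.append hr).subset hx)
    match s₁, hsplit with
    | [], hsplit =>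
      obtain ⟨rfl, rfl⟩ := by simpa using hsplit
      exact (hlt c (by simp)).not_gt hac
    | [_], hsplit =>
      obtain ⟨rfl, rfl, rfl⟩ := by simpa using hsplit
      exact (hlt a (by simp)).not_ge hba
    | [_, _], hsplit =>
      obtain ⟨rfl, rfl, rfl, rfl⟩ := by simpa using hsplit
      exact (pairwise_iff_forall_sublist.mp hA h₁).not_ge hba
    | _ :: _ :: _ :: _, hsplit => simp at hsplit

lemma pairwise_lt_of_avoidsPat_213_middle {A B : List ℕ} {M : ℕ}
    (h : AvoidsPat (A ++ M :: B) [2, 1, 3]) (hA : ∀ x ∈ A, x < M) : A.Pairwise (· < ·) := by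
  refine pairwise_iff_forall_sublist.mpr fun {a b} hab => not_le.mp fun hba => h ?_
  refine (containsPat_213_iff _).mpr ⟨a, b, M, hba, hA a (hab.subset (by simp)),
    hA b (hab.subset (by simp)), ?_⟩
  simpa using hab.append ((nil_sublist B).cons_cons M)

lemma length_insertMax (l : List ℕ) (i : ℕ) : (insertMax l i).length = l.length + 1 := by
  simp only [insertMax, length_append, length_take, length_cons, length_drop]
  omega

lemma insertMax_eq_append_cons {A B : List ℕ} :
    insertMax (A ++ B) A.length = A ++ ((A ++ B).length + 1) :: B := by
  rw [insertMax, take_left, drop_left]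

lemma insertMax_perm (l : List ℕ) (i : ℕ) : insertMax l i ~ (l.length + 1) :: l := by
  rw [insertMax]
  simpa only [take_append_drop] using perm_middle (l₁ := l.take i) (l₂ := l.drop i)

lemma sublist_insertMax (l : List ℕ) (i : ℕ) : l <+ insertMax l i := by
  rw [insertMax]
  simpa only [take_append_drop] using
    (Sublist.refl (l.take i)).append (sublist_cons_self _ (l.drop i))

lemma take_insertMax {l : List ℕ} {i : ℕ} (hi : i ≤ l.length) :
    (insertMax l i).take (i + 1) = l.take i ++ [l.length + 1] := by
  have hlen : (l.take i).length = i := length_take_of_le hi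
  rw [insertMax, take_append, hlen, take_of_length_le (by omega : (l.take i).length ≤ i + 1)]
  simp

lemma range'_one_succ (n : ℕ) : range' 1 (n + 1) ~ (n + 1) :: range' 1 n := by
  rw [range'_concat, Nat.one_mul, Nat.add_comm 1 n]
  exact perm_append_singleton _ _

lemma IsPermList.length_eq {n : ℕ} {l : List ℕ} (h : IsPermList n l) : l.length = n :=
  (Perm.length_eq h).trans length_range'

lemma IsPermList.mem_iff {n x : ℕ} {l : List ℕ} (h : IsPermList n l) :
    x ∈ l ↔ 1 ≤ x ∧ x ≤ n := by
  rw [Perm.mem_iff h, mem_range'_1]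
  omega

lemma IsPermList.insertMax {n : ℕ} {l : List ℕ} (h : IsPermList n l) (i : ℕ) :
    IsPermList (n + 1) (insertMax l i) := by
  obtain rfl := h.length_eq
  exact (insertMax_perm l i).trans ((h.cons _).trans (range'_one_succ _).symm)

lemma isPermList_of_insertMax {l : List ℕ} {i : ℕ}
    (h : IsPermList (l.length + 1) (insertMax l i)) : IsPermList l.length l :=
  (((insertMax_perm l i).symm.trans h).trans (range'_one_succ _)).cons_inv

lemma IsPermList.eq_range'_of_pairwise {n : ℕ} {l : List ℕ} (h : IsPermList n l)
    (hs : l.Pairwise (· < ·)) : l = range' 1 n :=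
  h.eq_of_sortedLE (hs.imp le_of_lt).sortedLE (sortedLE_range' 1 n 1)

lemma insertMax_range'_self (m : ℕ) : insertMax (range' 1 m) m = range' 1 (m + 1) := by
  rw [insertMax, take_of_length_le length_range'.le, drop_of_length_le length_range'.le,
    length_range', range'_concat, Nat.one_mul, Nat.add_comm 1 m]

lemma containsPat_21_insertMax {l : List ℕ} {i : ℕ} (hl : IsPermList l.length l)
    (hi : i < l.length) : ContainsPat (insertMax l i) [2, 1] := by
  refine (containsPat_21_iff _).mpr ⟨l.length + 1, l[i], ?_, ?_⟩
  · have := (hl.mem_iff.mp (getElem_mem hi)).2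
    omega
  · rw [insertMax, drop_eq_getElem_cons hi]
    exact (nil_sublist _).append (((nil_sublist _).cons_cons l[i]).cons_cons _)

lemma exists_insertMax_eq {n : ℕ} {π : List ℕ} (hπ : IsPermList (n + 1) π)
    (havoid : AvoidsPat π [2, 1, 3]) :
    ∃ l i, i ≤ l.length ∧ (l.take i).Pairwise (· < ·) ∧ insertMax l i = π := by
  obtain ⟨A, B, rfl⟩ := append_of_mem (hπ.mem_iff.mpr ⟨by omega, le_rfl⟩)
  have hlen : (A ++ B).length = n := by
    have := hπ.length_eq
    simp only [length_append, length_cons] at this ⊢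
    omega
  have hnodup : ((n + 1) :: (A ++ B)).Nodup := nodup_middle.mp (hπ.nodup_iff.mpr nodup_range')
  refine ⟨A ++ B, A.length, by simp, ?_, by rw [insertMax_eq_append_cons, hlen]⟩
  rw [take_left]
  refine pairwise_lt_of_avoidsPat_213_middle havoid fun x hx => ?_
  have hle := (hπ.mem_iff.mp (mem_append_left _ hx)).2
  have hne : x ≠ n + 1 := by
    rintro rfl
    exact (nodup_cons.mp hnodup).1 (mem_append_left B hx)
  omega

lemma standardize_map_of_strictMono {f : ℕ → ℕ} (hf : StrictMono f) (l : List ℕ) :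
    standardize (l.map f) = standardize l := by
  simp only [standardize, map_map, filter_map, length_map]
  congr 1
  funext x
  simp [Function.comp_def, hf.le_iff_le]

lemma length_filter_le_range' {n x : ℕ} (hx : x ≤ n) :
    ((range' 1 n).filter fun y => y ≤ x).length = x := by
  obtain ⟨k, rfl⟩ := Nat.exists_eq_add_of_le hx
  rw [← range'_append, filter_append, filter_eq_self.mpr, filter_eq_nil_iff.mpr, append_nil,
    length_range']
  · intro y hy
    rw [mem_range'_1] at hy
    simp only [decide_eq_true_eq, not_le]
    omega
  · intro y hy
    rw [mem_range'_1] at hy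
    simp only [decide_eq_true_eq]
    omega

lemma IsPermList.standardize_eq {n : ℕ} {l : List ℕ} (h : IsPermList n l) :
    standardize l = l := by
  refine (map_congr_left fun x hx => ?_).trans (map_id l)
  rw [(Perm.filter _ h).length_eq, length_filter_le_range' (h.mem_iff.mp hx).2, id]

lemma standardize_pair {a b : ℕ} (h : b < a) : standardize [a, b] = [2, 1] := by
  simp [standardize, h.le, h.not_ge]

lemma insStep_of_avoidsPat {p l : List ℕ} {i : ℕ} (h : AvoidsPat (insertMax l i) p) :
    insStep p l i = standardize (insertMax l i) := by
  rw [insStep, Nat.findGreatest_eq_iff.mpr ⟨le_rfl, fun _ => by rwa [take_length], by omega⟩,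
    take_length]

lemma insStep_of_containsPat {p l : List ℕ} {j : ℕ} (hj : j ≤ l.length)
    (havoid : AvoidsPat (l.take j) p) (hcont : ContainsPat (l.take j ++ [l.length + 1]) p) :
    insStep p l j = standardize (l.take j) := by
  have hprefix : (insertMax l j).take j = l.take j := by
    rw [insertMax, take_left' (length_take_of_le hj)]
  have hlongest : Nat.findGreatest (fun k => AvoidsPat ((insertMax l j).take k) p)
      (insertMax l j).length = j := by
    refine Nat.findGreatest_eq_iff.mpr ⟨by rw [length_insertMax]; omega,
      fun _ => hprefix ▸ havoid, fun k hk _ hk' => hk' ?_⟩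
    rw [← take_insertMax hj] at hcont
    exact hcont.mono (take_sublist_take_left hk)
  rw [insStep, hlongest, hprefix]

lemma Vertex213.ne_nil {l : List ℕ} (h : Vertex213 l) : l ≠ [] := by
  rintro rfl
  exact (avoidsPat_21_iff []).mpr Pairwise.nil h.2.2

lemma vertex213_21 : Vertex213 [2, 1] :=
  ⟨Perm.swap 1 2 [], avoidsPat_213_of_length_lt_three (by simp),
    (containsPat_21_iff _).mpr ⟨2, 1, by omega, Sublist.refl _⟩⟩

lemma vertex213_insertMax {l : List ℕ} {i : ℕ} (hv : IsPermList l.length l)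
    (havoid : AvoidsPat l [2, 1, 3]) (hs : (l.take i).Pairwise (· < ·))
    (hinv : ContainsPat (insertMax l i) [2, 1]) : Vertex213 (insertMax l i) := by
  refine ⟨length_insertMax l i ▸ hv.insertMax i, ?_, hinv⟩
  rw [insertMax]
  refine avoidsPat_213_middle (by rwa [take_append_drop]) hs fun x hx => ?_
  rw [take_append_drop] at hx
  have := (hv.mem_iff.mp hx).2
  omega

lemma edge213_insertMax {l : List ℕ} {i : ℕ} (hv : Vertex213 l) (hi : i ≤ l.length)
    (hs : (l.take i).Pairwise (· < ·)) : Edge213 l (insertMax l i) := by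
  obtain ⟨hperm, havoid, hinv⟩ := hv
  have hv' := vertex213_insertMax hperm havoid hs (hinv.mono (sublist_insertMax l i))
  refine ⟨⟨hperm, havoid, hinv⟩, hv', i, hi, ?_⟩
  rw [insStep_of_avoidsPat hv'.2.1, IsPermList.standardize_eq hv'.1]

lemma edge213_standardize_take {l : List ℕ} {j : ℕ} (hv : Vertex213 l) (hj : j ≤ l.length)
    (hinv : ContainsPat (l.take j) [2, 1]) (hv' : Vertex213 (standardize (l.take j))) :
    Edge213 l (standardize (l.take j)) := by
  obtain ⟨a, b, hba, hab⟩ := (containsPat_21_iff _).mp hinv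
  have hlt : ∀ x ∈ [a, b], x < l.length + 1 := fun x hx => by
    have := (hv.1.mem_iff.mp ((hab.trans (take_sublist j l)).subset hx)).2
    omega
  refine ⟨hv, hv', j, hj, insStep_of_containsPat hj (hv.2.1.sublist (take_sublist j l)) ?_⟩
  refine (containsPat_213_iff _).mpr
    ⟨a, b, l.length + 1, hba, hlt a (by simp), hlt b (by simp), ?_⟩
  simpa using hab.append (Sublist.refl [l.length + 1])

def longCycle (m : ℕ) : List ℕ := range' 2 m ++ [1]

lemma insertMax_longCycle_self (m : ℕ) : insertMax (longCycle m) m = longCycle (m + 1) := by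
  have := insertMax_eq_append_cons (A := range' 2 m) (B := [1])
  rw [length_range'] at this
  rw [longCycle, this, longCycle, range'_concat]
  simp only [length_append, length_range', length_singleton, append_assoc, singleton_append,
    Nat.one_mul, Nat.add_comm 2 m]

lemma edge213_longCycle {m : ℕ} (hv : Vertex213 (longCycle m)) :
    Edge213 (longCycle m) (longCycle (m + 1)) :=
  insertMax_longCycle_self m ▸ edge213_insertMax hv (by simp [longCycle])
    (by rw [longCycle, take_left' length_range']; exact pairwise_lt_range')

lemma vertex213_longCycle {m : ℕ} (hm : 1 ≤ m) : Vertex213 (longCycle m) := by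
  induction m, hm using Nat.le_induction with
  | base => exact vertex213_21
  | succ m _ ih => exact (edge213_longCycle ih).2.1

lemma reflTransGen_longCycle {m : ℕ} (hm : 1 ≤ m) :
    Relation.ReflTransGen Edge213 [2, 1] (longCycle m) := by
  induction m, hm using Nat.le_induction with
  | base => exact .refl
  | succ m hm ih => exact ih.tail (edge213_longCycle (vertex213_longCycle hm))

lemma insertMax_longCycle {m i : ℕ} (hi : i ≤ m) :
    insertMax (longCycle m) i = (insertMax (range' 1 m) i).map (· + 1) ++ [1] := by
  have hshift : (range' 1 m).map (· + 1) = range' 2 m := by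
    simpa only [Nat.add_comm _ 1] using map_add_range' (a := 1) 1 m 1
  have hlen : i ≤ ((range' 1 m).map (· + 1)).length := by simpa using hi
  rw [longCycle, ← hshift, insertMax, insertMax, take_append_of_le_length hlen,
    drop_append_of_le_length hlen]
  simp only [map_append, map_cons, map_take, map_drop, length_append, length_map,
    length_singleton, append_assoc, cons_append]

lemma vertex213_insertMax_range' {m i : ℕ} (hi : i < m) : Vertex213 (insertMax (range' 1 m) i) :=
  have hperm : IsPermList (range' 1 m).length (range' 1 m) := length_range' ▸ Perm.refl _
  vertex213_insertMax hperm (avoidsPat_213_of_pairwise pairwise_lt_range')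
    (Pairwise.sublist (take_sublist i _) pairwise_lt_range')
    (containsPat_21_insertMax hperm (length_range' ▸ hi))

lemma reflTransGen_insertMax_range' {m i : ℕ} (hi : i < m) :
    Relation.ReflTransGen Edge213 [2, 1] (insertMax (range' 1 m) i) := by
  set l := insertMax (longCycle m) i with hl
  have htake : l.take (m + 1) = (insertMax (range' 1 m) i).map (· + 1) := by
    rw [hl, insertMax_longCycle hi.le]
    exact take_left' (by simp [length_insertMax])
  have hstd : standardize (l.take (m + 1)) = insertMax (range' 1 m) i := by
    rw [htake, standardize_map_of_strictMono add_left_strictMono,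
      (IsPermList.insertMax (n := m) (Perm.refl _) i).standardize_eq]
  have hgrow : Edge213 (longCycle m) l :=
    edge213_insertMax (vertex213_longCycle (by omega)) (by simp [longCycle]; omega)
      (by rw [longCycle, take_append_of_le_length (by simpa using hi.le)]
          exact Pairwise.sublist (take_sublist i _) pairwise_lt_range')
  have hinv : ContainsPat (l.take (m + 1)) [2, 1] :=
    htake ▸ (vertex213_insertMax_range' hi).2.2.map_of_strictMono add_left_strictMono
  have hcut := edge213_standardize_take hgrow.2.1 (by simp [l, length_insertMax, longCycle])
    hinv (hstd ▸ vertex213_insertMax_range' hi)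
  exact ((reflTransGen_longCycle (by omega)).tail hgrow).tail (hstd ▸ hcut)

lemma reflTransGen_of_vertex213 {π : List ℕ} (hπ : Vertex213 π) :
    Relation.ReflTransGen Edge213 [2, 1] π := by
  induction hN : π.length using Nat.strong_induction_on generalizing π with
  | _ N ih =>
    obtain ⟨n, rfl⟩ : ∃ n, N = n + 1 :=
      Nat.exists_eq_add_one.mpr (hN ▸ length_pos_of_ne_nil hπ.ne_nil)
    obtain ⟨l, i, hi, hs, rfl⟩ := exists_insertMax_eq (hN ▸ hπ.1) hπ.2.1
    have hperm : IsPermList l.length l := isPermList_of_insertMax (length_insertMax l i ▸ hπ.1)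
    have havoid := hπ.2.1.sublist (sublist_insertMax l i)
    by_cases hinv : ContainsPat l [2, 1]
    · have hlen : l.length < n + 1 := by rw [← hN, length_insertMax]; omega
      have hv : Vertex213 l := ⟨hperm, havoid, hinv⟩
      exact (ih _ hlen hv rfl).tail (edge213_insertMax hv hi hs)
    · obtain ⟨m, rfl⟩ : ∃ m, l = range' 1 m :=
        ⟨_, hperm.eq_range'_of_pairwise ((avoidsPat_21_iff l).mp hinv)⟩
      rw [length_range'] at hi
      refine reflTransGen_insertMax_range' (lt_of_le_of_ne hi fun him => ?_)
      rw [him, insertMax_range'_self] at hπ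
      exact (avoidsPat_21_iff _).mpr pairwise_lt_range' hπ.2.2

lemma reflTransGen_to_21 {σ : List ℕ} (hσ : Vertex213 σ) :
    Relation.ReflTransGen Edge213 σ [2, 1] := by
  obtain ⟨x, t, rfl⟩ := exists_cons_of_ne_nil hσ.ne_nil
  have hgrow := edge213_insertMax hσ (Nat.zero_le _) (by simp)
  have htake : (insertMax (x :: t) 0).take 2 = [(x :: t).length + 1, x] := rfl
  have hx : x < (x :: t).length + 1 := by
    have := (hσ.1.mem_iff.mp mem_cons_self).2
    omega
  have hstd : standardize ((insertMax (x :: t) 0).take 2) = [2, 1] := by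
    rw [htake, standardize_pair hx]
  have hcut := edge213_standardize_take hgrow.2.1 (by simp [length_insertMax])
    (htake ▸ (containsPat_21_iff _).mpr ⟨_, _, hx.le, Sublist.refl _⟩) (hstd ▸ vertex213_21)
  exact .head hgrow (.single (hstd ▸ hcut))

/-- Between any two vertices of the 213-avoider graph there is a directed path. -/
theorem edge213_strongly_connected (σ π : List ℕ)
    (hσ : Vertex213 σ) (hπ : Vertex213 π) :
    Relation.ReflTransGen Edge213 σ π :=
  (reflTransGen_to_21 hσ).trans (reflTransGen_of_vertex213 hπ)
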